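/- Fix integers l ≥ 2 and nonnegative integers n₀, …, n_l, and consider the polynomial ring ℂ[t_{s,i} : 0 ≤ s ≤ l, 1 ≤ i ≤ n_s]. Let V be the set of polynomials f that are invariant under all permutations of the variables t_{s,1}, …, t_{s,n_s} within each block s, and such that for all 0 ≤ s < r ≤ l with r − s ≥ 2, all 1 ≤ i ≤ n_s, 1 ≤ j ≤ n_r, and all 0 ≤ w ≤ r − s − 2, the polynomial obtained from ∂^w f/∂t_{s,i}^w by substituting t_{r,j} := t_{s,i} is zero. Then V = Δ · ℂ[t]^{S_{n₀} × … × S_{n_l}}, where Δ = Π_{0 ≤ s < r ≤ l, r−s ≥ 2} Π_{1 ≤ i ≤ n_s, 1 ≤ j ≤ n_r} (t_{s,i} − t_{r,j})^{r−s−1} and ℂ[t]^{S_{n₀} × … × S_{n_l}} is the space of polynomials invariant under permutations of variables within each block. -/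

import Mathlib

/-!
`Δ` is a product of powers of the linear forms `t_{s,i} - t_{r,j}`, which are irreducible and
pairwise non-associated; hence `Δ ∣ f` iff `(t_{s,i} - t_{r,j})^{r-s-1} ∣ f` for every factor.
In characteristic zero, `(X x - X y)^m ∣ f` iff `∂^w f/∂x^w` vanishes on the diagonal `y = x`
for all `w < m`: if `f = (X x - X y)^k h`, then `∂^k f/∂x^k` restricts on the diagonal to
`k! h|_{y=x}`. Finally `Δ` is nonzero and blockwise symmetric, so `Δ g` is blockwise
symmetric iff `g` is.
-/

open MvPolynomial

/-- A polynomial in the variables `t_{s,i}` (`0 ≤ s ≤ l`, `1 ≤ i ≤ n_s`, modelled by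
the sigma type `(s : Fin (l+1)) × Fin (n s)`) is blockwise symmetric if it is invariant
under all permutations of the variables within each block. -/
def BlockSymmetric {l : ℕ} (n : Fin (l + 1) → ℕ)
    (f : MvPolynomial ((s : Fin (l + 1)) × Fin (n s)) ℂ) : Prop :=
  ∀ σ : Equiv.Perm ((s : Fin (l + 1)) × Fin (n s)),
    (∀ x, (σ x).1 = x.1) → MvPolynomial.rename ⇑σ f = f

/-- The polynomial `Δ = Π_{0 ≤ s < r ≤ l, r-s ≥ 2} Π_{i,j} (t_{s,i} - t_{r,j})^{r-s-1}`. -/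
noncomputable def DeltaPoly {l : ℕ} (n : Fin (l + 1) → ℕ) :
    MvPolynomial ((s : Fin (l + 1)) × Fin (n s)) ℂ :=
  ∏ s : Fin (l + 1), ∏ r : Fin (l + 1),
    if (s : ℕ) + 2 ≤ (r : ℕ) then
      ∏ i : Fin (n s), ∏ j : Fin (n r),
        (X (⟨s, i⟩ : (s : Fin (l + 1)) × Fin (n s)) - X ⟨r, j⟩) ^ ((r : ℕ) - (s : ℕ) - 1)
    else 1

namespace MvPolynomial

variable {σ R : Type*} [CommRing R]

theorem pderiv_X_sub_X_pow_succ_mul {x y : σ} (hxy : x ≠ y) (k : ℕ) (h : MvPolynomial σ R) :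
    pderiv x ((X x - X y) ^ (k + 1) * h) =
      (X x - X y) ^ k * (((k + 1 : ℕ) : MvPolynomial σ R) * h + (X x - X y) * pderiv x h) := by
  simp only [pderiv_mul, pderiv_pow, map_sub, pderiv_X_self, pderiv_X_of_ne hxy.symm]
  push_cast
  ring

theorem irreducible_X_sub_X [IsDomain R] {a b : σ} (hab : a ≠ b) :
    Irreducible (X a - X b : MvPolynomial σ R) := by
  simpa [sub_eq_add_neg] using
    irreducible_mul_X_add 1 (-X b) a one_ne_zero (by simp) (by simp [vars_X, hab])
      isRelPrime_one_left

variable [DecidableEq σ]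

theorem aeval_ite_X_eq_rename_update (x y : σ) :
    aeval (fun v => if v = y then X x else X v) = rename (R := R) (Function.update id y x) := by
  refine algHom_ext fun v => ?_
  rcases eq_or_ne v y with rfl | hv <;> simp [*]

theorem X_sub_X_dvd_sub_rename_update (x y : σ) (p : MvPolynomial σ R) :
    X x - X y ∣ p - rename (Function.update id y x) p := by
  set I := Ideal.span {(X x - X y : MvPolynomial σ R)}
  have hcomp : (Ideal.Quotient.mkₐ R I).comp (rename (Function.update id y x)) =
      Ideal.Quotient.mkₐ R I := by
    refine algHom_ext fun v => ?_
    rcases eq_or_ne v y with rfl | hv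
    · simp [Ideal.Quotient.eq, I]
    · simp [hv]
  rw [← Ideal.mem_span_singleton, ← Ideal.Quotient.eq]
  exact (DFunLike.congr_fun hcomp p).symm

theorem rename_update_X_sub_X (x y : σ) :
    rename (Function.update id y x) (X x - X y : MvPolynomial σ R) = 0 := by
  rcases eq_or_ne x y with rfl | h <;> simp [*]

theorem X_sub_X_dvd_iff_rename_update_eq_zero {x y : σ} {p : MvPolynomial σ R} :
    X x - X y ∣ p ↔ rename (Function.update id y x) p = 0 := by
  refine ⟨fun ⟨q, hq⟩ => by rw [hq, map_mul, rename_update_X_sub_X, zero_mul], fun h => ?_⟩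
  simpa [h] using X_sub_X_dvd_sub_rename_update x y p

/-- On the diagonal `y = x`, each derivative multiplies the cofactor by the current exponent. -/
theorem exists_iterate_pderiv_X_sub_X_pow_mul {x y : σ} (hxy : x ≠ y) {m w : ℕ} (hw : w ≤ m)
    (h : MvPolynomial σ R) :
    ∃ h', (pderiv x)^[w] ((X x - X y) ^ m * h) = (X x - X y) ^ (m - w) * h' ∧
      rename (Function.update id y x) h' =
        (m.descFactorial w : MvPolynomial σ R) * rename (Function.update id y x) h := by
  induction w with
  | zero => exact ⟨h, by simp⟩
  | succ w ih =>
    obtain ⟨h', hh', hτ⟩ := ih (by omega)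
    obtain ⟨k, hk⟩ : ∃ k, m - w = k + 1 := ⟨m - w - 1, by omega⟩
    refine ⟨((k + 1 : ℕ) : MvPolynomial σ R) * h' + (X x - X y) * pderiv x h', ?_, ?_⟩
    · rw [Function.iterate_succ_apply', hh', hk, pderiv_X_sub_X_pow_succ_mul hxy,
        show m - (w + 1) = k by omega]
    · rw [map_add, map_mul, map_mul, rename_update_X_sub_X, map_natCast, hτ,
        Nat.descFactorial_succ, hk]
      push_cast
      ring

theorem X_sub_X_pow_dvd_iff [IsDomain R] [CharZero R] {x y : σ} (hxy : x ≠ y) (m : ℕ)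
    (f : MvPolynomial σ R) :
    (X x - X y) ^ m ∣ f ↔
      ∀ w < m, rename (Function.update id y x) ((pderiv x)^[w] f) = 0 := by
  induction m generalizing f with
  | zero => simp
  | succ m ih =>
    constructor
    · rintro ⟨h, rfl⟩ w hw
      obtain ⟨h', hh', -⟩ := exists_iterate_pderiv_X_sub_X_pow_mul hxy hw.le h
      rw [hh', show m + 1 - w = (m - w) + 1 by omega, ← X_sub_X_dvd_iff_rename_update_eq_zero]
      exact Dvd.dvd.mul_right (dvd_pow_self _ (Nat.succ_ne_zero _)) _
    · intro hvan
      obtain ⟨h, rfl⟩ := (ih f).2 fun w hw => hvan w (by omega)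
      obtain ⟨h', hh', hτ⟩ := exists_iterate_pderiv_X_sub_X_pow_mul hxy le_rfl h
      have hτh : rename (Function.update id y x) h = 0 := by
        have := hvan m (by omega)
        rw [hh', Nat.sub_self, pow_zero, one_mul, hτ, Nat.descFactorial_self] at this
        exact (mul_eq_zero.1 this).resolve_left (Nat.cast_ne_zero.2 m.factorial_ne_zero)
      rw [pow_succ]
      exact mul_dvd_mul_left _ (X_sub_X_dvd_iff_rename_update_eq_zero.2 hτh)

theorem X_sub_X_dvd_X_sub_X [Nontrivial R] {a b c d : σ} (hab : a ≠ b)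
    (h : (X c - X d : MvPolynomial σ R) ∣ X a - X b) :
    (a = c ∧ b = d) ∨ (a = d ∧ b = c) := by
  have := X_sub_X_dvd_iff_rename_update_eq_zero.1 h
  simp only [map_sub, rename_X, sub_eq_zero, X_injective.eq_iff, Function.update_apply, id] at this
  split_ifs at this <;> grind

end MvPolynomial

section DeltaPoly

variable {l : ℕ} (n : Fin (l + 1) → ℕ)

abbrev BlockVar : Type := (s : Fin (l + 1)) × Fin (n s)

def deltaPairs : Finset (BlockVar n × BlockVar n) :=
  {e | (e.1.1 : ℕ) + 2 ≤ e.2.1}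

noncomputable def deltaFactor (e : BlockVar n × BlockVar n) : MvPolynomial (BlockVar n) ℂ :=
  (X e.1 - X e.2) ^ ((e.2.1 : ℕ) - e.1.1 - 1)

@[simp]
theorem mem_deltaPairs {e : BlockVar n × BlockVar n} :
    e ∈ deltaPairs n ↔ (e.1.1 : ℕ) + 2 ≤ e.2.1 := by
  simp [deltaPairs]

theorem DeltaPoly_eq_prod_deltaFactor : DeltaPoly n = ∏ e ∈ deltaPairs n, deltaFactor n e := by
  rw [deltaPairs, Finset.prod_filter, Fintype.prod_prod_type, Fintype.prod_sigma, DeltaPoly]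
  refine Finset.prod_congr rfl fun s _ => ?_
  rw [Finset.prod_comm]
  simp_rw [Fintype.prod_sigma]
  refine Finset.prod_congr rfl fun r _ => ?_
  split_ifs <;> simp [*, deltaFactor, Finset.prod_comm (s := (Finset.univ : Finset (Fin (n s))))]

variable {n}

theorem fst_ne_snd_of_mem_deltaPairs {e} (he : e ∈ deltaPairs n) : e.1 ≠ e.2 := by
  intro h
  simp [h] at he

theorem isRelPrime_deltaFactor {e e'} (he : e ∈ deltaPairs n) (he' : e' ∈ deltaPairs n)
    (hne : e ≠ e') : IsRelPrime (deltaFactor n e) (deltaFactor n e') := by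
  refine IsRelPrime.pow <|
    (irreducible_X_sub_X (fst_ne_snd_of_mem_deltaPairs he)).isRelPrime_iff_not_dvd.2 fun h => ?_
  rcases X_sub_X_dvd_X_sub_X (fst_ne_snd_of_mem_deltaPairs he') h with ⟨h1, h2⟩ | ⟨h1, h2⟩
  · exact hne (Prod.ext h1.symm h2.symm)
  · simp only [mem_deltaPairs, h1, h2] at he he'
    omega

variable (n)

theorem DeltaPoly_ne_zero : DeltaPoly n ≠ 0 := by
  rw [DeltaPoly_eq_prod_deltaFactor]
  exact Finset.prod_ne_zero_iff.2 fun e he =>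
    pow_ne_zero _ (irreducible_X_sub_X (fst_ne_snd_of_mem_deltaPairs he)).ne_zero

theorem DeltaPoly_dvd_iff {f : MvPolynomial (BlockVar n) ℂ} :
    DeltaPoly n ∣ f ↔ ∀ e ∈ deltaPairs n, deltaFactor n e ∣ f := by
  rw [DeltaPoly_eq_prod_deltaFactor]
  exact ⟨fun h e he => (Finset.dvd_prod_of_mem _ he).trans h,
    Finset.prod_dvd_of_isRelPrime fun e he e' he' hne => isRelPrime_deltaFactor he he' hne⟩

theorem blockSymmetric_DeltaPoly : BlockSymmetric n (DeltaPoly n) := by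
  intro σ hσ
  rw [DeltaPoly_eq_prod_deltaFactor, map_prod]
  refine Finset.prod_equiv (σ.prodCongr σ) (by simp [hσ]) fun e _ => ?_
  simp [deltaFactor, hσ]

theorem DeltaPoly_dvd_iff_vanishing (f : MvPolynomial (BlockVar n) ℂ) :
    DeltaPoly n ∣ f ↔
      ∀ (s r : Fin (l + 1)), (s : ℕ) + 2 ≤ (r : ℕ) →
        ∀ (i : Fin (n s)) (j : Fin (n r)) (w : ℕ), w + (s : ℕ) + 2 ≤ (r : ℕ) →
          aeval (fun v : BlockVar n =>
              if v = ⟨r, j⟩ then (X ⟨s, i⟩ : MvPolynomial (BlockVar n) ℂ) else X v)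
            ((pderiv (⟨s, i⟩ : BlockVar n))^[w] f) = 0 := by
  simp only [DeltaPoly_dvd_iff, deltaFactor, aeval_ite_X_eq_rename_update]
  constructor
  · intro h s r hsr i j w hw
    have he : ((⟨s, i⟩, ⟨r, j⟩) : BlockVar n × BlockVar n) ∈ deltaPairs n := by simpa
    exact (X_sub_X_pow_dvd_iff (fst_ne_snd_of_mem_deltaPairs he) ((r : ℕ) - s - 1) f).1
      (h _ he) w (by omega)
  · rintro h ⟨⟨s, i⟩, ⟨r, j⟩⟩ he
    have hsr : (s : ℕ) + 2 ≤ r := by simpa using he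
    exact (X_sub_X_pow_dvd_iff (fst_ne_snd_of_mem_deltaPairs he) ((r : ℕ) - s - 1) f).2
      fun w hw => h s r hsr i j w (by omega)

namespace BlockSymmetric

variable {n}

theorem mul {f g : MvPolynomial (BlockVar n) ℂ} (hf : BlockSymmetric n f)
    (hg : BlockSymmetric n g) : BlockSymmetric n (f * g) := fun σ hσ => by
  rw [map_mul, hf σ hσ, hg σ hσ]

theorem of_mul_left {f g : MvPolynomial (BlockVar n) ℂ} (hf : BlockSymmetric n f) (hf0 : f ≠ 0)
    (hfg : BlockSymmetric n (f * g)) : BlockSymmetric n g := fun σ hσ =>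
  mul_left_cancel₀ hf0 <| by rw [← hf σ hσ, ← map_mul, hfg σ hσ, hf σ hσ]

end BlockSymmetric

end DeltaPoly

theorem vanishing_iff_divisible_by_Delta (l : ℕ) (n : Fin (l + 1) → ℕ)
    (f : MvPolynomial ((s : Fin (l + 1)) × Fin (n s)) ℂ) :
    (BlockSymmetric n f ∧
      ∀ (s r : Fin (l + 1)), (s : ℕ) + 2 ≤ (r : ℕ) →
        ∀ (i : Fin (n s)) (j : Fin (n r)) (w : ℕ), w + (s : ℕ) + 2 ≤ (r : ℕ) →
          MvPolynomial.aeval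
              (fun v : (s' : Fin (l + 1)) × Fin (n s') =>
                if v = ⟨r, j⟩ then
                  (X (⟨s, i⟩ : (s' : Fin (l + 1)) × Fin (n s')) :
                    MvPolynomial ((s' : Fin (l + 1)) × Fin (n s')) ℂ)
                else X v)
              ((⇑(MvPolynomial.pderiv (⟨s, i⟩ : (s' : Fin (l + 1)) × Fin (n s'))))^[w] f)
            = 0) ↔
      ∃ g, BlockSymmetric n g ∧ f = DeltaPoly n * g := by
  rw [← DeltaPoly_dvd_iff_vanishing]
  constructor
  · rintro ⟨hsym, g, rfl⟩
    exact ⟨g, (blockSymmetric_DeltaPoly n).of_mul_left (DeltaPoly_ne_zero n) hsym, rfl⟩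
  · rintro ⟨g, hg, rfl⟩
    exact ⟨(blockSymmetric_DeltaPoly n).mul hg, dvd_mul_right _ _⟩
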